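/- Let n ≥ 1 and let t_1, …, t_n be cycle types, each equal to {2,2} or {5}, such that the number of i with t_i = {2,2} is even. Then there exist c_1, …, c_n in the dihedral subgroup D_5 = ⟨(1 2 3 4 5), (2 5)(3 4)⟩ of Perm (Fin 5) such that each c_i has cycle type t_i and ∏_{i=1}^n c_i has cycle type {5}. -/
import Mathlib
set_option maxRecDepth 20000
set_option maxHeartbeats 1000000


open Equiv

/-- The dihedral subgroup `D₅ = ⟨(1 2 3 4 5), (2 5)(3 4)⟩` of `Perm (Fin 5)`. -/
def D5 : Subgroup (Equiv.Perm (Fin 5)) :=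
  Subgroup.closure {c[0, 1, 2, 3, 4], c[1, 4] * c[2, 3]}

namespace D5Aux

def rr : Perm (Fin 5) := c[0, 1, 2, 3, 4]
def ss : Perm (Fin 5) := c[1, 4] * c[2, 3]

lemma rr_mem : rr ∈ D5 := Subgroup.subset_closure (Set.mem_insert _ _)
lemma ss_mem : ss ∈ D5 := Subgroup.subset_closure (Set.mem_insert_of_mem _ rfl)

lemma rr_order : orderOf rr = 5 :=
  haveI : Fact (Nat.Prime 5) := ⟨by norm_num⟩
  orderOf_eq_prime (by decide) (by decide)

lemma rr_pow_mod (m : ℕ) : rr ^ m = rr ^ (m % 5) := by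
  have h : rr ^ (m % orderOf rr) = rr ^ m := pow_mod_orderOf rr m
  rw [rr_order] at h
  exact h.symm

lemma cyc5 (m : ℕ) (hm : m % 5 ≠ 0) : (rr ^ m).cycleType = {5} := by
  rw [rr_pow_mod]
  have h : m % 5 = 1 ∨ m % 5 = 2 ∨ m % 5 = 3 ∨ m % 5 = 4 := by omega
  rcases h with h | h | h | h <;> rw [h] <;> decide

lemma srel (m : ℕ) : ss * rr ^ m = (rr ^ m)⁻¹ * ss := by
  induction m with
  | zero => simp
  | succ k ih =>
    have base : ss * rr = rr⁻¹ * ss := by decide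
    rw [pow_succ, ← mul_assoc, ih, mul_assoc, base, mul_inv_rev]
    group

lemma cyc22 (m : ℕ) : (ss * rr ^ m).cycleType = {2, 2} := by
  rw [rr_pow_mod]
  have h : m % 5 = 0 ∨ m % 5 = 1 ∨ m % 5 = 2 ∨ m % 5 = 3 ∨ m % 5 = 4 := by omega
  rcases h with h | h | h | h | h <;> rw [h] <;> decide

/-- counting helper -/
lemma card_filter_range_succ (P : ℕ → Prop) [DecidablePred P] (i : ℕ) :
    ((Finset.range (i + 1)).filter P).card
      = ((Finset.range i).filter P).card + (if P i then 1 else 0) := by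
  rw [Finset.range_add_one, Finset.filter_insert]
  split
  · rw [Finset.card_insert_of_notMem (by simp)]
  · simp

/-- telescoping product -/
lemma telescope {G : Type*} [Group G] (g : ℕ → G) :
    ∀ n : ℕ, (List.ofFn fun i : Fin n => (g i.val)⁻¹ * g (i.val + 1)).prod = (g 0)⁻¹ * g n
  | 0 => by simp
  | n + 1 => by
    rw [List.ofFn_succ', List.prod_concat]
    simp only [Fin.coe_castSucc, Fin.val_last]
    rw [telescope g n]
    group

section Main

variable (n : ℕ) (T : ℕ → Multiset ℕ)

def kk (i : ℕ) : ℕ := ((Finset.range i).filter fun j => T j = ({5} : Multiset ℕ)).card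
def mm (i : ℕ) : ℕ := ((Finset.range i).filter fun j => T j = ({2, 2} : Multiset ℕ)).card
def dd : ℕ := if kk T n % 5 = 0 then 1 else 0
def cc (i : ℕ) : ℕ := if i = 0 then 0 else kk T i + dd n T
def qq (i : ℕ) : Perm (Fin 5) := ss ^ mm T i * rr ^ cc n T i
def pp (i : ℕ) : Perm (Fin 5) := (qq n T i)⁻¹ * qq n T (i + 1)

variable (hT : ∀ j, T j = {2, 2} ∨ T j = {5})

lemma ne2522 : ({5} : Multiset ℕ) ≠ {2, 2} := by decide

lemma qq_mem (i : ℕ) : qq n T i ∈ D5 :=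
  mul_mem (pow_mem ss_mem _) (pow_mem rr_mem _)

lemma pp_mem (i : ℕ) : pp n T i ∈ D5 :=
  mul_mem (inv_mem (qq_mem n T i)) (qq_mem n T (i + 1))

lemma dd_le : dd n T ≤ 1 := by unfold dd; split <;> omega

lemma kk_succ (i : ℕ) : kk T (i + 1) = kk T i + if T i = {5} then 1 else 0 :=
  card_filter_range_succ _ i

lemma mm_succ (i : ℕ) : mm T (i + 1) = mm T i + if T i = ({2,2} : Multiset ℕ) then 1 else 0 :=
  card_filter_range_succ _ i

lemma kk_zero : kk T 0 = 0 := by simp [kk]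

lemma pp_cycleType_five (i : ℕ) (h5 : T i = {5}) : (pp n T i).cycleType = {5} := by
  have hk : kk T (i + 1) = kk T i + 1 := by rw [kk_succ]; simp [h5]
  have hm : mm T (i + 1) = mm T i := by
    rw [mm_succ]; rw [h5]; simp [ne2522 ]
  have hc : cc n T (i + 1) = cc n T i + (if i = 0 then 1 + dd n T else 1) := by
    by_cases hi : i = 0
    · subst hi
      have h1 : kk T 1 = 1 := by rw [kk_succ]; simp [kk_zero, h5]
      simp [cc, h1]
    · simp only [cc, hi, if_false, Nat.succ_ne_zero, hk]
      omega
  have hpp : pp n T i = rr ^ (if i = 0 then 1 + dd n T else 1) := by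
    unfold pp qq
    rw [hm, hc, pow_add]
    group
  rw [hpp]
  apply cyc5
  have := dd_le n T
  split <;> omega

lemma pp_cycleType_two (i : ℕ) (h2 : T i = {2, 2}) : (pp n T i).cycleType = {2, 2} := by
  have hm : mm T (i + 1) = mm T i + 1 := by rw [mm_succ]; simp [h2]
  have hpp : pp n T i = ss * rr ^ (cc n T i + cc n T (i + 1)) := by
    unfold pp qq
    rw [hm, pow_succ, pow_add]
    have h1 : (ss ^ mm T i * rr ^ cc n T i)⁻¹ * (ss ^ mm T i * ss * rr ^ cc n T (i + 1))
        = (rr ^ cc n T i)⁻¹ * ss * rr ^ cc n T (i + 1) := by group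
    rw [h1, ← srel, mul_assoc]
  rw [hpp]
  exact cyc22 _

end Main
end D5Aux

open D5Aux in
/-- For a nonempty tuple of types, each `{2,2}` or `{5}`, with an even number of
`{2,2}`'s, one can choose elements of `D₅` of those cycle types whose product is a
5-cycle. -/
theorem exists_prod_in_D5_of_cycleType_five
    (n : ℕ) (hn : 1 ≤ n) (t : Fin n → Multiset ℕ)
    (ht : ∀ i, t i = {2, 2} ∨ t i = {5})
    (heven : Even (Finset.univ.filter fun i => t i = ({2, 2} : Multiset ℕ)).card) :
    ∃ p : Fin n → Equiv.Perm (Fin 5),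
      (∀ i, p i ∈ D5) ∧ (∀ i, (p i).cycleType = t i) ∧
      ((List.ofFn p).prod).cycleType = {5} := by
  classical
  set T : ℕ → Multiset ℕ := fun j => if h : j < n then t ⟨j, h⟩ else {5} with hTdef
  have hTt : ∀ i : Fin n, T i.val = t i := fun i => by simp [hTdef, i.isLt]
  refine ⟨fun i => pp n T i.val, fun i => pp_mem n T i.val, fun i => ?_, ?_⟩
  · rcases ht i with h | h
    · rw [← hTt i] at h; rw [pp_cycleType_two n T i.val h, ← hTt i, h]
    · rw [← hTt i] at h; rw [pp_cycleType_five n T i.val h, ← hTt i, h]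
  · -- product
    have htel : (List.ofFn fun i : Fin n => pp n T i.val).prod = (qq n T 0)⁻¹ * qq n T n :=
      telescope (qq n T) n
    have hq0 : qq n T 0 = 1 := by simp [qq, mm, cc, kk]
    -- transfer heven to mm
    have hmmn : mm T n = (Finset.univ.filter fun i : Fin n => t i = ({2, 2} : Multiset ℕ)).card := by
      rw [Finset.card_filter]
      unfold mm
      rw [Finset.card_filter]
      rw [← Fin.sum_univ_eq_sum_range (fun j => if T j = ({2, 2} : Multiset ℕ) then 1 else 0) n]
      exact Finset.sum_congr rfl fun i _ => by rw [hTt i]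
    have heven' : Even (mm T n) := hmmn ▸ heven
    obtain ⟨a, ha⟩ := heven'
    have hsmm : ss ^ mm T n = 1 := by
      rw [ha, ← two_mul, pow_mul, show ss ^ 2 = 1 by decide, one_pow]
    have hcn : cc n T n % 5 ≠ 0 := by
      have hn0 : n ≠ 0 := by omega
      simp only [cc, hn0, if_false, dd]
      split <;> omega
    rw [htel, hq0, inv_one, one_mul]
    show (qq n T n).cycleType = {5}
    rw [qq, hsmm, one_mul]
    exact cyc5 _ hcn
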